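/- Let G be a τ-critical graph with τ(G) = t, |V(G)| = n, and let r be a nonnegative integer with r ≤ t. Then r·|V(G)| + |E(G)| ≤ (t+r+1 choose 2). -/

import Mathlib

/-
Hajnal's degree bound `d(v) + n ≤ 2τ + 1` for τ-critical graphs, summed over all vertices,
gives `2|E| + n² ≤ n (2τ + 1)`, and the claimed inequality is a consequence of this.

Criticality means that every edge `xy` lies in a set `S` of more than `n - τ` vertices whose only
internal edge is `xy`. Hajnal's lemma `|I| ≤ |N(I) \ N(v)|`, for `I` independent and `v` neither
in `I` nor adjacent to it, is proved by strong induction on `I`: take such an `S` for an edge from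
`I` (if `N(I)` misses `N(v)`) or for an edge `vw` with `w ∈ N(I) ∩ N(v)`. The induction hypothesis,
applied to the part of `I` inside `S`, finds enough of `N(I) \ N(v)` outside `S`; otherwise
exchanging `S ∩ N(I)` for `I` would give an independent set of more than `n - τ` vertices.
For the degree bound apply the lemma to `S \ {v, u}` for an edge `vu`.
-/

open SimpleGraph

variable {V : Type*}

/-- A transversal set (vertex cover): a set of vertices incident to all edges. -/
def IsTransversal (G : SimpleGraph V) (T : Finset V) : Prop :=
  ∀ ⦃u v : V⦄, G.Adj u v → u ∈ T ∨ v ∈ T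

/-- The transversal number `τ(G)`: minimum cardinality of a transversal set. -/
noncomputable def tauNum (G : SimpleGraph V) [Fintype V] : ℕ :=
  sInf {k | ∃ T : Finset V, T.card = k ∧ IsTransversal G T}

/-- `G` is τ-critical: it has no isolated vertex and deleting any edge decreases `τ`. -/
def IsTauCritical (G : SimpleGraph V) [Fintype V] : Prop :=
  (∀ v : V, ∃ u, G.Adj v u) ∧
    ∀ e ∈ G.edgeSet, tauNum (G.deleteEdges {e}) < tauNum G

/-- `mK2 m` is the disjoint union of `m` copies of `K₂`. -/
def mK2 (m : ℕ) : SimpleGraph (Fin m × Fin 2) where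
  Adj x y := x.1 = y.1 ∧ x.2 ≠ y.2
  symm := ⟨fun _ _ ⟨h1, h2⟩ => ⟨h1.symm, h2.symm⟩⟩
  loopless := ⟨fun _ ⟨_, h⟩ => h rfl⟩

/-- The spectral radius `λ₁(G)`: the largest eigenvalue of the adjacency matrix of `G`. -/
noncomputable def specRad (G : SimpleGraph V) [Fintype V] [DecidableEq V]
    [DecidableRel G.Adj] : ℝ :=
  sSup (spectrum ℝ (G.adjMatrix ℝ))

/-- The signless Laplacian spectral radius `q₁(G)`: the largest eigenvalue of
`Q(G) = D(G) + A(G)`. -/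
noncomputable def signlessLapSpecRad (G : SimpleGraph V) [Fintype V] [DecidableEq V]
    [DecidableRel G.Adj] : ℝ :=
  sSup (spectrum ℝ (Matrix.diagonal (fun v => (G.degree v : ℝ)) + G.adjMatrix ℝ))

open Finset

section Transversal

variable {G : SimpleGraph V} [Fintype V]

lemma IsTransversal.tauNum_le {T : Finset V} (hT : IsTransversal G T) : tauNum G ≤ #T :=
  Nat.sInf_le ⟨T, rfl, hT⟩

variable (G) in
lemma exists_isTransversal_card_eq_tauNum :
    ∃ T : Finset V, #T = tauNum G ∧ IsTransversal G T :=
  Nat.sInf_mem (s := {k | ∃ T : Finset V, #T = k ∧ IsTransversal G T})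
    ⟨_, univ, rfl, fun u _ _ => .inl (mem_univ u)⟩

lemma isTransversal_compl_iff [DecidableEq V] {S : Finset V} :
    IsTransversal G Sᶜ ↔ G.IsIndepSet S := by
  rw [← isVertexCover_compl, ← coe_compl]
  rfl

end Transversal

namespace SimpleGraph

def neighborhood (G : SimpleGraph V) [Fintype V] [DecidableRel G.Adj] (I : Finset V) :
    Finset V :=
  {z | ∃ x ∈ I, G.Adj x z}

variable {G : SimpleGraph V} {x y : V}

lemma IsIndepSet.mk_eq_of_deleteEdges {S : Set V} (hS : (G.deleteEdges {s(x, y)}).IsIndepSet S)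
    {a b : V} (ha : a ∈ S) (hb : b ∈ S) (hab : G.Adj a b) : s(a, b) = s(x, y) := by
  by_contra h
  exact hS ha hb hab.ne ((deleteEdges_adj ..).2 ⟨hab, h⟩)

section Neighborhood

variable [Fintype V] [DecidableRel G.Adj]

@[simp]
lemma mem_neighborhood {I : Finset V} {z : V} :
    z ∈ G.neighborhood I ↔ ∃ x ∈ I, G.Adj x z := by
  simp [neighborhood]

lemma neighborhood_mono {I K : Finset V} (h : K ⊆ I) :
    G.neighborhood K ⊆ G.neighborhood I := fun z hz => by
  obtain ⟨x, hx, hxz⟩ := mem_neighborhood.1 hz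
  exact mem_neighborhood.2 ⟨x, h hx, hxz⟩

lemma IsIndepSet.disjoint_neighborhood_of_deleteEdges {S K : Finset V}
    (hS : (G.deleteEdges {s(x, y)}).IsIndepSet S) (hKS : K ⊆ S) (hx : x ∉ K) (hy : y ∉ K) :
    Disjoint (G.neighborhood K) S := by
  refine Finset.disjoint_left.2 fun b hb hbS => ?_
  obtain ⟨z, hz, hzb⟩ := mem_neighborhood.1 hb
  rcases Sym2.eq_iff.1 (hS.mk_eq_of_deleteEdges (hKS hz) hbS hzb) with ⟨rfl, -⟩ | ⟨rfl, -⟩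
  · exact hx hz
  · exact hy hz

end Neighborhood

variable [DecidableEq V]

lemma IsIndepSet.sdiff_of_deleteEdges {S N : Finset V}
    (hS : (G.deleteEdges {s(x, y)}).IsIndepSet S) (hy : y ∈ N) : G.IsIndepSet ↑(S \ N) := by
  intro a ha b hb _ hab
  simp only [coe_sdiff, Set.mem_sdiff, mem_coe] at ha hb
  rcases Sym2.eq_iff.1 (hS.mk_eq_of_deleteEdges ha.1 hb.1 hab) with ⟨-, rfl⟩ | ⟨rfl, -⟩
  · exact hb.2 hy
  · exact ha.2 hy

variable [Fintype V]

lemma IsIndepSet.card_add_tauNum_le {S : Finset V} (hS : G.IsIndepSet S) :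
    #S + tauNum G ≤ Fintype.card V := by
  have hτ := (isTransversal_compl_iff.mpr hS).tauNum_le
  rw [card_compl] at hτ
  have := card_le_univ S
  omega

variable [DecidableRel G.Adj]

lemma IsIndepSet.card_add_card_add_tauNum_le {I S : Finset V} (hI : G.IsIndepSet I)
    (hS : G.IsIndepSet ↑(S \ G.neighborhood I)) :
    #S + #I + tauNum G ≤ Fintype.card V + #(S ∩ G.neighborhood I) + #(I ∩ S) := by
  have hSI : G.IsIndepSet ↑(S \ G.neighborhood I ∪ I) := by
    rw [coe_union, isIndepSet_iff, Set.pairwise_union]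
    refine ⟨hS, hI, fun a ha b hb _ => ⟨fun hab => ?_, fun hba => ?_⟩⟩
    · exact (mem_sdiff.1 ha).2 (mem_neighborhood.2 ⟨b, hb, hab.symm⟩)
    · exact (mem_sdiff.1 ha).2 (mem_neighborhood.2 ⟨b, hb, hba⟩)
  have h₁ := hSI.card_add_tauNum_le
  have h₂ := card_union_add_card_inter (S \ G.neighborhood I) I
  have h₃ := card_sdiff_add_card_inter S (G.neighborhood I)
  have h₄ : #(S \ G.neighborhood I ∩ I) ≤ #(I ∩ S) :=
    card_le_card fun z hz => by simp only [mem_inter, mem_sdiff] at hz ⊢; tauto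
  omega

end SimpleGraph

namespace IsTauCritical

variable {G : SimpleGraph V} [Fintype V]

lemma exists_isIndepSet_deleteEdges (hG : IsTauCritical G) {x y : V} (hxy : G.Adj x y) :
    ∃ S : Finset V, x ∈ S ∧ y ∈ S ∧ Fintype.card V < #S + tauNum G ∧
      (G.deleteEdges {s(x, y)}).IsIndepSet S := by
  classical
  obtain ⟨T, hTcard, hT⟩ := exists_isTransversal_card_eq_tauNum (G.deleteEdges {s(x, y)})
  have hlt : tauNum (G.deleteEdges {s(x, y)}) < tauNum G := hG.2 _ hxy
  have hxyT : x ∉ T ∧ y ∉ T := by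
    by_contra hcov
    have hTG : IsTransversal G T := fun a b hab => by
      by_cases he : s(a, b) = s(x, y)
      · rcases Sym2.eq_iff.1 he with ⟨rfl, rfl⟩ | ⟨rfl, rfl⟩ <;> tauto
      · exact hT ((deleteEdges_adj ..).2 ⟨hab, he⟩)
    have := hTG.tauNum_le
    omega
  refine ⟨Tᶜ, by simpa using hxyT.1, by simpa using hxyT.2, ?_,
    isTransversal_compl_iff.mp (by rwa [compl_compl])⟩
  have := card_le_univ T
  rw [card_compl]
  omega

section Hajnal

variable [DecidableEq V] [DecidableRel G.Adj] {v : V} {I : Finset V}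

lemma card_le_card_neighborhood_sdiff_of_disjoint (hG : IsTauCritical G)
    (hI : G.IsIndepSet I) (hIne : I.Nonempty)
    (hsub : ∀ J ⊂ I, #J ≤ #(G.neighborhood J \ G.neighborFinset v))
    (hdisj : Disjoint (G.neighborhood I) (G.neighborFinset v)) :
    #I ≤ #(G.neighborhood I \ G.neighborFinset v) := by
  obtain ⟨x, hx⟩ := hIne
  obtain ⟨y, hxy⟩ := hG.1 x
  have hyN : y ∈ G.neighborhood I := mem_neighborhood.2 ⟨x, hx, hxy⟩
  obtain ⟨S, hxS, -, hScard, hSind⟩ := hG.exists_isIndepSet_deleteEdges hxy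
  set K := (I ∩ S).erase x
  have hKI : K ⊂ I := (erase_ssubset (mem_inter.2 ⟨hx, hxS⟩)).trans_subset inter_subset_left
  have hKS : Disjoint (G.neighborhood K) S :=
    hSind.disjoint_neighborhood_of_deleteEdges ((erase_subset _ _).trans inter_subset_right)
      (notMem_erase x _) fun hyK => hI (hKI.subset hyK) hx hxy.ne.symm hxy.symm
  have hK : #K ≤ #((G.neighborhood I \ G.neighborFinset v) \ S) :=
    (hsub K hKI).trans <| card_le_card fun z hz => by
      simp only [mem_sdiff] at hz ⊢
      exact ⟨⟨neighborhood_mono hKI.subset hz.1, hz.2⟩, Finset.disjoint_left.1 hKS hz.1⟩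
  have hIS : #(I ∩ S) - 1 ≤ #K := pred_card_le_card_erase
  have hSN : #(S ∩ G.neighborhood I) ≤ #((G.neighborhood I \ G.neighborFinset v) ∩ S) :=
    card_le_card fun z hz => by
      simp only [mem_inter, mem_sdiff] at hz ⊢
      exact ⟨⟨hz.2, Finset.disjoint_left.1 hdisj hz.2⟩, hz.1⟩
  have := card_sdiff_add_card_inter (G.neighborhood I \ G.neighborFinset v) S
  have := hI.card_add_card_add_tauNum_le (hSind.sdiff_of_deleteEdges hyN)
  omega

lemma card_le_card_neighborhood_sdiff_of_not_disjoint (hG : IsTauCritical G)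
    (hI : G.IsIndepSet I) (hvI : v ∉ I) (hv : ∀ x ∈ I, ¬G.Adj v x)
    (hsub : ∀ J ⊂ I, #J ≤ #(G.neighborhood J \ G.neighborFinset v))
    (hdisj : ¬Disjoint (G.neighborhood I) (G.neighborFinset v)) :
    #I ≤ #(G.neighborhood I \ G.neighborFinset v) := by
  obtain ⟨w, hwN, hvw⟩ := not_disjoint_iff.1 hdisj
  rw [mem_neighborFinset] at hvw
  obtain ⟨x, hx, hxw⟩ := mem_neighborhood.1 hwN
  obtain ⟨S, hvS, hwS, hScard, hSind⟩ := hG.exists_isIndepSet_deleteEdges hvw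
  have hxS : x ∉ S := fun hxS => by
    rcases Sym2.eq_iff.1 (hSind.mk_eq_of_deleteEdges hxS hwS hxw) with ⟨rfl, -⟩ | ⟨rfl, rfl⟩
    · exact hvI hx
    · exact hvw.ne rfl
  have hKI : I ∩ S ⊂ I := (ssubset_iff_of_subset inter_subset_left).2
    ⟨x, hx, fun h => hxS (mem_inter.1 h).2⟩
  have hKS : Disjoint (G.neighborhood (I ∩ S)) S :=
    hSind.disjoint_neighborhood_of_deleteEdges inter_subset_right
      (fun h => hvI (mem_inter.1 h).1) fun h => hv w (mem_inter.1 h).1 hvw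
  have hK : #(I ∩ S) ≤ #((G.neighborhood I \ G.neighborFinset v) \ S) :=
    (hsub _ hKI).trans <| card_le_card fun z hz => by
      simp only [mem_sdiff] at hz ⊢
      exact ⟨⟨neighborhood_mono hKI.subset hz.1, hz.2⟩, Finset.disjoint_left.1 hKS hz.1⟩
  have hSN : S ∩ G.neighborhood I ⊆ insert w ((G.neighborhood I \ G.neighborFinset v) ∩ S) := by
    intro z hz
    rw [mem_inter] at hz
    by_cases hvz : G.Adj v z
    · rcases Sym2.eq_iff.1 (hSind.mk_eq_of_deleteEdges hvS hz.1 hvz) with ⟨-, rfl⟩ | ⟨rfl, -⟩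
      · exact mem_insert_self _ _
      · exact (hvw.ne rfl).elim
    · simp [hz, hvz]
  have := (card_le_card hSN).trans (card_insert_le _ _)
  have := card_sdiff_add_card_inter (G.neighborhood I \ G.neighborFinset v) S
  have := hI.card_add_card_add_tauNum_le (hSind.sdiff_of_deleteEdges hwN)
  omega

theorem card_le_card_neighborhood_sdiff (hG : IsTauCritical G) (hI : G.IsIndepSet I)
    (hvI : v ∉ I) (hv : ∀ x ∈ I, ¬G.Adj v x) :
    #I ≤ #(G.neighborhood I \ G.neighborFinset v) := by
  induction I using Finset.strongInduction with
  | H I ih =>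
    have hsub : ∀ J ⊂ I, #J ≤ #(G.neighborhood J \ G.neighborFinset v) := fun J hJ =>
      ih J hJ (hI.mono (coe_subset.2 hJ.subset)) (fun h => hvI (hJ.subset h))
        fun x hx => hv x (hJ.subset hx)
    rcases I.eq_empty_or_nonempty with rfl | hIne
    · simp
    by_cases hdisj : Disjoint (G.neighborhood I) (G.neighborFinset v)
    · exact hG.card_le_card_neighborhood_sdiff_of_disjoint hI hIne hsub hdisj
    · exact hG.card_le_card_neighborhood_sdiff_of_not_disjoint hI hvI hv hsub hdisj

end Hajnal

variable [DecidableRel G.Adj]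

theorem degree_add_card_le (hG : IsTauCritical G) (v : V) :
    G.degree v + Fintype.card V ≤ 2 * tauNum G + 1 := by
  classical
  obtain ⟨u, hvu⟩ := hG.1 v
  obtain ⟨S, hvS, -, hScard, hSind⟩ := hG.exists_isIndepSet_deleteEdges hvu
  set I := S \ {v, u}
  have hIS : Disjoint (G.neighborhood I) S :=
    hSind.disjoint_neighborhood_of_deleteEdges sdiff_subset (by simp [I]) (by simp [I])
  have hI : G.IsIndepSet I := fun a ha b hb _ hab =>
    Finset.disjoint_left.1 hIS (mem_neighborhood.2 ⟨a, ha, hab⟩) (sdiff_subset hb)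
  have hv : ∀ x ∈ I, ¬G.Adj v x := fun x hx hvx =>
    Finset.disjoint_left.1 hIS (mem_neighborhood.2 ⟨x, hx, hvx.symm⟩) hvS
  have hSv : S ∩ G.neighborFinset v ⊆ {u} := fun z hz => by
    rw [mem_inter, mem_neighborFinset] at hz
    rcases Sym2.eq_iff.1 (hSind.mk_eq_of_deleteEdges hvS hz.1 hz.2) with ⟨-, rfl⟩ | ⟨rfl, -⟩
    · exact mem_singleton_self z
    · exact (hvu.ne rfl).elim
  have hdisj : Disjoint (G.neighborhood I \ G.neighborFinset v) (S ∪ G.neighborFinset v) :=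
    disjoint_union_right.2 ⟨hIS.mono_left sdiff_subset, sdiff_disjoint⟩
  have h₁ := hG.card_le_card_neighborhood_sdiff hI (by simp [I]) hv
  have h₂ := (card_union_of_disjoint hdisj).symm.trans_le (card_le_univ _)
  have h₃ := card_union_add_card_inter S (G.neighborFinset v)
  have h₄ := card_le_card hSv
  have h₅ : #S - 2 ≤ #I := (Nat.sub_le_sub_left card_le_two _).trans (le_card_sdiff _ _)
  rw [card_neighborFinset_eq_degree] at h₃
  rw [card_singleton] at h₄
  omega

theorem two_mul_card_edgeFinset_add_le (hG : IsTauCritical G) :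
    2 * #G.edgeFinset + Fintype.card V * Fintype.card V ≤
      Fintype.card V * (2 * tauNum G + 1) := by
  have := Finset.sum_le_sum fun v (_ : v ∈ univ) => hG.degree_add_card_le v
  simpa [sum_add_distrib, sum_degrees_eq_twice_card_edges] using this

end IsTauCritical

theorem tau_critical_r_card_add_edges_le_general (G : SimpleGraph V) [Fintype V] [DecidableRel G.Adj]
    (t n r : ℕ) (hcrit : IsTauCritical G) (ht : tauNum G = t)
    (hn : Fintype.card V = n) :
    r * n + G.edgeFinset.card ≤ (t + r + 1).choose 2 := by
  have hedges := hcrit.two_mul_card_edgeFinset_add_le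
  rw [ht, hn] at hedges
  rw [Nat.choose_two_right, Nat.add_sub_cancel, Nat.le_div_iff_mul_le two_pos]
  -- the slack is `m * (m + 1) ≥ 0` for the integer `m = t + r - n`
  have hm : 0 ≤ ((t + r : ℤ) - n) * ((t + r : ℤ) - n + 1) := by
    rcases le_or_gt 0 ((t + r : ℤ) - n) with h | h <;> nlinarith
  zify at hedges ⊢
  nlinarith

/-- For a τ-critical graph `G` with `τ(G) = t`, `|V(G)| = n`, and a
nonnegative integer `r ≤ t`, we have `r·|V(G)| + |E(G)| ≤ (t+r+1 choose 2)`. -/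
theorem tau_critical_r_card_add_edges_le (G : SimpleGraph V) [Fintype V] [DecidableRel G.Adj]
    (t n r : ℕ) (hcrit : IsTauCritical G) (ht : tauNum G = t)
    (hn : Fintype.card V = n) (hr : r ≤ t) :
    r * n + G.edgeFinset.card ≤ (t + r + 1).choose 2 :=
  tau_critical_r_card_add_edges_le_general G t n r hcrit ht hn
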